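/- arXiv:1209.0604 — 2 statements merged into one kernel-verified Lean document; each statement's English description precedes it below -/
import Mathlib

section
/- sum_{n=1}^infty H_n * zeta(4, n) = (5/4)*zeta(4) + 3*zeta(5) - zeta(2)*zeta(3) - zeta(3), where zeta(4, n) is the Hurwitz zeta function. -/
open scoped BigOperators

noncomputable def H (n : ℕ) : ℝ := ∑ k ∈ Finset.range n, (1 : ℝ) / (k + 1)

noncomputable def h : ℕ → ℕ → ℝ
  | 0, n => 1 / n
  | r + 1, n => ∑ k ∈ Finset.range n, h r (k + 1)

noncomputable def zeta (m : ℕ) : ℝ := ∑' n : ℕ, (1 : ℝ) / ((n : ℝ) + 1) ^ m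

noncomputable def hzeta (m k : ℕ) : ℝ := ∑' j : ℕ, (1 : ℝ) / ((j : ℝ) + k) ^ m

noncomputable def zetaH (m : ℕ) : ℝ := ∑' n : ℕ, H (n + 1) / ((n : ℝ) + 1) ^ m

def stirling1 : ℕ → ℕ → ℕ
  | 0, 0 => 1
  | 0, _ + 1 => 0
  | _ + 1, 0 => 0
  | n + 1, k + 1 => stirling1 n k + n * stirling1 n (k + 1)


/-!
Writing `ζ(4, n) = ∑_{m ≥ n} m⁻⁴` and exchanging the order of summation, the identity
`∑_{n ≤ m} H_n = (m + 1) H_m - m` turns the sum into `S₃ + S₄ - ζ(3)`, where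
`S_s = ∑_n H_n / n^s`. These linear Euler sums are given by Euler's formula
`2 S_{t+3} = (t + 5) ζ(t + 4) - ∑_{i+j=t} ζ(i + 2) ζ(j + 2)`: summing the partial fraction
expansion of `1 / (x^(t+2) y (x + y))` over `x, y ≥ 1` (the inner sum over `y` telescopes to
`H_x / x`) expresses `S_{t+3}` through double zeta values, which the stuffle relation
`ζ(a) ζ(b) = ζ(a, b) + ζ(b, a) + ζ(a + b)` then eliminates. Finally `ζ(2)² = 5/2 ζ(4)`.
-/

open Finset

lemma H_succ (n : ℕ) : H (n + 1) = H n + 1 / ((n : ℝ) + 1) :=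
  sum_range_succ _ _

lemma H_nonneg (n : ℕ) : 0 ≤ H n := by
  unfold H; positivity

lemma H_le_self (n : ℕ) : H n ≤ n := by
  induction n with
  | zero => simp [H]
  | succ n ih =>
    have : 1 / ((n : ℝ) + 1) ≤ 1 :=
      div_le_one_of_le₀ (by linarith [n.cast_nonneg (α := ℝ)]) (by positivity)
    rw [H_succ, Nat.cast_succ]
    linarith

lemma sum_range_H_succ (m : ℕ) :
    ∑ n ∈ range (m + 1), H (n + 1) = ((m : ℝ) + 2) * H (m + 1) - ((m : ℝ) + 1) := by
  induction m with
  | zero => norm_num [H]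
  | succ m ih =>
    rw [sum_range_succ, ih, H_succ (m + 1)]
    push_cast
    field_simp
    ring

lemma tendsto_H_add_sub_H (a : ℕ) :
    Filter.Tendsto (fun N : ℕ => H (N + a) - H N) Filter.atTop (nhds 0) := by
  have hsplit (N : ℕ) : H (N + a) - H N = ∑ i ∈ range a, 1 / ((N : ℝ) + i + 1) := by
    simp only [H, sum_range_add, add_sub_cancel_left, Nat.cast_add, add_assoc]
  simp_rw [hsplit]
  simpa using tendsto_finsetSum (range a) fun i _ =>
    (tendsto_one_div_add_atTop_nhds_zero_nat (𝕜 := ℝ)).comp (Filter.tendsto_add_atTop_nat i)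

lemma summable_one_div_nat_add_one_pow {p : ℕ} (hp : 2 ≤ p) :
    Summable fun n : ℕ => 1 / ((n : ℝ) + 1) ^ p := by
  simpa using (summable_nat_add_iff 1).2 (Real.summable_one_div_nat_pow.2 hp)

lemma summable_H_succ_div_pow {s : ℕ} (hs : 3 ≤ s) :
    Summable fun n : ℕ => H (n + 1) / ((n : ℝ) + 1) ^ s := by
  refine .of_nonneg_of_le (fun n => div_nonneg (H_nonneg _) (by positivity)) (fun n => ?_)
    (summable_one_div_nat_add_one_pow le_rfl)
  have hx : (1 : ℝ) ≤ n + 1 := by linarith [n.cast_nonneg (α := ℝ)]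
  calc H (n + 1) / ((n : ℝ) + 1) ^ s ≤ ((n : ℝ) + 1) / ((n : ℝ) + 1) ^ 3 := by
        gcongr
        exact_mod_cast H_le_self (n + 1)
    _ = 1 / ((n : ℝ) + 1) ^ 2 := by field_simp

lemma summable_of_le_one_div_sq_mul_sq {F : ℕ × ℕ → ℝ} (h0 : 0 ≤ F)
    (hle : ∀ p : ℕ × ℕ, F p ≤ 1 / (((p.1 : ℝ) + 1) ^ 2 * ((p.2 : ℝ) + 1) ^ 2)) :
    Summable F := by
  have hsq := summable_one_div_nat_add_one_pow le_rfl
  exact .of_nonneg_of_le h0 (fun p => (hle p).trans_eq (one_div_mul_one_div _ _).symm)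
    (hsq.mul_of_nonneg hsq (fun _ => by positivity) (fun _ => by positivity))

lemma summable_doubleZeta_term {a b : ℕ} (ha : 2 ≤ a) (hb : 1 ≤ b) (hab : 4 ≤ a + b) :
    Summable fun p : ℕ × ℕ => 1 / (((p.1 : ℝ) + p.2 + 2) ^ a * ((p.1 : ℝ) + 1) ^ b) := by
  refine summable_of_le_one_div_sq_mul_sq (fun _ => by positivity) fun p => ?_
  refine one_div_le_one_div_of_le (by positivity) ?_
  have hx : (1 : ℝ) ≤ p.1 + 1 := by linarith [p.1.cast_nonneg (α := ℝ)]
  have hxX : (p.1 : ℝ) + 1 ≤ p.1 + p.2 + 2 := by linarith [p.2.cast_nonneg (α := ℝ)]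
  have hyX : (p.2 : ℝ) + 1 ≤ p.1 + p.2 + 2 := by linarith [p.1.cast_nonneg (α := ℝ)]
  have hX : (1 : ℝ) ≤ p.1 + p.2 + 2 := hx.trans hxX
  rcases hb.eq_or_lt with rfl | hb
  · calc ((p.1 : ℝ) + 1) ^ 2 * ((p.2 : ℝ) + 1) ^ 2
        = ((p.1 : ℝ) + 1) * (((p.2 : ℝ) + 1) ^ 2 * ((p.1 : ℝ) + 1)) := by ring
      _ ≤ ((p.1 : ℝ) + 1) * (((p.1 : ℝ) + p.2 + 2) ^ 2 * ((p.1 : ℝ) + p.2 + 2)) := by gcongr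
      _ = ((p.1 : ℝ) + p.2 + 2) ^ 3 * ((p.1 : ℝ) + 1) ^ 1 := by ring
      _ ≤ ((p.1 : ℝ) + p.2 + 2) ^ a * ((p.1 : ℝ) + 1) ^ 1 := by gcongr; omega
  · calc ((p.1 : ℝ) + 1) ^ 2 * ((p.2 : ℝ) + 1) ^ 2
        ≤ ((p.1 : ℝ) + 1) ^ b * ((p.1 : ℝ) + p.2 + 2) ^ a :=
          mul_le_mul (pow_le_pow_right₀ hx hb)
            ((pow_le_pow_left₀ (by positivity) hyX 2).trans (pow_le_pow_right₀ hX ha))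
            (by positivity) (by positivity)
      _ = ((p.1 : ℝ) + p.2 + 2) ^ a * ((p.1 : ℝ) + 1) ^ b := mul_comm _ _

lemma summable_one_div_pow_mul_mul_add {s : ℕ} (hs : 2 ≤ s) :
    Summable fun p : ℕ × ℕ =>
      1 / (((p.1 : ℝ) + 1) ^ s * ((p.2 : ℝ) + 1) * ((p.1 : ℝ) + p.2 + 2)) := by
  refine summable_of_le_one_div_sq_mul_sq (fun _ => by positivity) fun p => ?_
  refine one_div_le_one_div_of_le (by positivity) ?_
  have hx : (1 : ℝ) ≤ p.1 + 1 := by linarith [p.1.cast_nonneg (α := ℝ)]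
  have hyX : (p.2 : ℝ) + 1 ≤ p.1 + p.2 + 2 := by linarith [p.1.cast_nonneg (α := ℝ)]
  rw [sq ((p.2 : ℝ) + 1), ← mul_assoc]
  gcongr

lemma tsum_prod_eq_tsum_sum_antidiagonal {F : ℕ × ℕ → ℝ} (hF : Summable F) :
    ∑' p, F p = ∑' n, ∑ kl ∈ antidiagonal n, F kl := by
  rw [← HasAntidiagonal.sigmaAntidiagonalEquivProd.tsum_eq F]
  exact (HasAntidiagonal.sigmaAntidiagonalEquivProd.summable_iff.mpr hF).tsum_sigma.trans
    (tsum_congr fun n => Finset.tsum_subtype _ _)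

lemma summable_prod_of_summable_sum_antidiagonal {F : ℕ × ℕ → ℝ} (hF : 0 ≤ F)
    (h : Summable fun n => ∑ kl ∈ antidiagonal n, F kl) : Summable F := by
  rw [← HasAntidiagonal.sigmaAntidiagonalEquivProd.summable_iff]
  refine (summable_sigma_of_nonneg (fun _ => hF _)).2 ⟨fun n => (hasSum_fintype _).summable, ?_⟩
  simpa only [Function.comp_apply, HasAntidiagonal.sigmaAntidiagonalEquivProd_apply,
    Finset.tsum_subtype (antidiagonal _) F] using h

lemma tsum_prod_eq_tsum_lt_add_tsum_gt_add_tsum_diag {F : ℕ × ℕ → ℝ} (hF : Summable F) :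
    ∑' p, F p = ∑' q : ℕ × ℕ, F (q.1, q.1 + q.2 + 1) + ∑' q : ℕ × ℕ, F (q.1 + q.2 + 1, q.1)
      + ∑' n, F (n, n) := by
  have tsum_comp {ι : Type} {g : ι → ℕ × ℕ} (hg : g.Injective) :
      ∑' i, F (g i) = ∑' p, (Set.range g).indicator F p :=
    (tsum_range F hg).symm.trans (tsum_subtype _ F)
  have range_lt : Set.range (fun q : ℕ × ℕ => (q.1, q.1 + q.2 + 1)) = {p | p.1 < p.2} := by
    ext ⟨m, n⟩
    simp only [Set.mem_range, Prod.mk.injEq, Prod.exists, Set.mem_ofPred_eq]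
    exact ⟨by rintro ⟨a, b, rfl, rfl⟩; omega, fun h => ⟨m, n - m - 1, rfl, by omega⟩⟩
  have range_gt : Set.range (fun q : ℕ × ℕ => (q.1 + q.2 + 1, q.1)) = {p | p.2 < p.1} := by
    ext ⟨m, n⟩
    simp only [Set.mem_range, Prod.mk.injEq, Prod.exists, Set.mem_ofPred_eq]
    exact ⟨by rintro ⟨a, b, rfl, rfl⟩; omega, fun h => ⟨n, m - n - 1, by omega, rfl⟩⟩
  have range_diag : Set.range (fun n : ℕ => (n, n)) = {p | p.1 = p.2} := by
    ext ⟨m, n⟩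
    simp only [Set.mem_range, Prod.mk.injEq, Set.mem_ofPred_eq]
    exact ⟨by rintro ⟨a, rfl, rfl⟩; rfl, fun h => ⟨m, rfl, h⟩⟩
  rw [tsum_comp (g := fun q : ℕ × ℕ => (q.1, q.1 + q.2 + 1))
      (fun q r h => by simp only [Prod.mk.injEq] at h; ext <;> omega),
    tsum_comp (g := fun q : ℕ × ℕ => (q.1 + q.2 + 1, q.1))
      (fun q r h => by simp only [Prod.mk.injEq] at h; ext <;> omega),
    tsum_comp (g := fun n : ℕ => (n, n)) (fun m n h => (Prod.mk.inj h).1),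
    range_lt, range_gt, range_diag, ← (hF.indicator _).tsum_add (hF.indicator _),
    ← ((hF.indicator _).add (hF.indicator _)).tsum_add (hF.indicator _)]
  refine tsum_congr fun p => ?_
  simp only [Set.indicator_apply, Set.mem_ofPred_eq]
  rcases lt_trichotomy p.1 p.2 with h | h | h
  · simp [h, h.ne, h.not_gt]
  · simp [h]
  · simp [h, h.ne', h.not_gt]

lemma sum_range_one_div_mul_add (a N : ℕ) :
    ∑ k ∈ range N, 1 / (((k : ℝ) + 1) * ((k : ℝ) + a + 2))
      = (H N + H (a + 1) - H (N + (a + 1))) / ((a : ℝ) + 1) := by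
  induction N with
  | zero => simp [H]
  | succ N ih =>
    rw [sum_range_succ, ih, Nat.add_right_comm, H_succ N, H_succ (N + (a + 1))]
    push_cast
    field_simp
    ring

lemma hasSum_one_div_mul_add (a : ℕ) :
    HasSum (fun k : ℕ => 1 / (((k : ℝ) + 1) * ((k : ℝ) + a + 2))) (H (a + 1) / ((a : ℝ) + 1)) := by
  rw [hasSum_iff_tendsto_nat_of_nonneg (fun _ => by positivity)]
  have hpartial (N : ℕ) : ∑ k ∈ range N, 1 / (((k : ℝ) + 1) * ((k : ℝ) + a + 2))
      = (H (a + 1) - (H (N + (a + 1)) - H N)) / ((a : ℝ) + 1) := by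
    rw [sum_range_one_div_mul_add]; ring
  simp_rw [hpartial]
  simpa using ((tendsto_H_add_sub_H (a + 1)).const_sub (H (a + 1))).div_const ((a : ℝ) + 1)

lemma tsum_one_div_pow_mul_mul_add {s : ℕ} (hs : 2 ≤ s) :
    ∑' p : ℕ × ℕ, 1 / (((p.1 : ℝ) + 1) ^ s * ((p.2 : ℝ) + 1) * ((p.1 : ℝ) + p.2 + 2))
      = zetaH (s + 1) := by
  rw [(summable_one_div_pow_mul_mul_add hs).tsum_prod, zetaH]
  refine tsum_congr fun a => ?_
  have hfactor (k : ℕ) : 1 / (((a : ℝ) + 1) ^ s * ((k : ℝ) + 1) * ((a : ℝ) + k + 2))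
      = 1 / ((a : ℝ) + 1) ^ s * (1 / (((k : ℝ) + 1) * ((k : ℝ) + a + 2))) := by
    rw [one_div_mul_one_div]; ring_nf
  rw [tsum_congr hfactor, tsum_mul_left, (hasSum_one_div_mul_add a).tsum_eq]
  field_simp
  ring

/-- The double zeta value `ζ(a, b) = ∑_{n > m ≥ 1} n⁻ᵃ m⁻ᵇ`, indexed by `m = p.1 + 1` and
`n = p.1 + p.2 + 2`. -/
noncomputable def doubleZeta (a b : ℕ) : ℝ :=
  ∑' p : ℕ × ℕ, 1 / (((p.1 : ℝ) + p.2 + 2) ^ a * ((p.1 : ℝ) + 1) ^ b)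

lemma zetaH_eq_doubleZeta_add_zeta {s : ℕ} (hs : 3 ≤ s) :
    zetaH s = doubleZeta s 1 + zeta (s + 1) := by
  have hD : doubleZeta s 1 = ∑' n : ℕ, H (n + 1) / ((n : ℝ) + 2) ^ s := by
    rw [doubleZeta, tsum_prod_eq_tsum_sum_antidiagonal
      (summable_doubleZeta_term (by omega) le_rfl (by omega))]
    refine tsum_congr fun n => ?_
    rw [Nat.sum_antidiagonal_eq_sum_range_succ_mk, H, sum_div]
    refine sum_congr rfl fun k hk => ?_
    rw [Nat.cast_sub (Nat.lt_succ_iff.mp (mem_range.mp hk))]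
    field_simp
    ring
  have hsplit (n : ℕ) : H (n + 1) / ((n : ℝ) + 1) ^ s
      = H n / ((n : ℝ) + 1) ^ s + 1 / ((n : ℝ) + 1) ^ (s + 1) := by
    rw [H_succ]; field_simp; ring
  have hzeta_succ := summable_one_div_nat_add_one_pow (p := s + 1) (by omega)
  have hsum : Summable fun n : ℕ => H n / ((n : ℝ) + 1) ^ s :=
    ((summable_H_succ_div_pow hs).sub hzeta_succ).congr fun n => by rw [hsplit]; ring
  rw [zetaH, zeta, tsum_congr hsplit, hsum.tsum_add hzeta_succ, hsum.tsum_eq_zero_add, hD]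
  push_cast
  simp only [H, range_zero, sum_empty, zero_div, zero_add]
  ring_nf

lemma zeta_mul_zeta {a b : ℕ} (ha : 2 ≤ a) (hb : 2 ≤ b) :
    zeta a * zeta b = doubleZeta b a + doubleZeta a b + zeta (a + b) := by
  have hfa := summable_one_div_nat_add_one_pow ha
  have hfb := summable_one_div_nat_add_one_pow hb
  have hprod := Summable.mul_of_nonneg hfa hfb (by intro n; positivity) (by intro n; positivity)
  rw [zeta, zeta, hfa.tsum_mul_tsum hfb hprod,
    tsum_prod_eq_tsum_lt_add_tsum_gt_add_tsum_diag hprod, doubleZeta, doubleZeta, zeta]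
  congr 2
  · refine tsum_congr fun q => ?_
    push_cast
    rw [one_div_mul_one_div, mul_comm]
    ring_nf
  · refine tsum_congr fun q => ?_
    push_cast
    rw [one_div_mul_one_div]
    ring_nf
  · funext n
    rw [one_div_mul_one_div, pow_add]

/- Iterate `1 / (x y) = (1 / x + 1 / y) / (x + y)`. -/
lemma one_div_pow_mul_mul_add {x y : ℝ} (hx : x ≠ 0) (hy : y ≠ 0) (hxy : x + y ≠ 0) (t : ℕ) :
    1 / (x ^ (t + 2) * y * (x + y))
      = 1 / ((x + y) ^ (t + 3) * y) + 1 / ((x + y) ^ (t + 3) * x ^ 1)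
        + ∑ ij ∈ antidiagonal t, 1 / ((x + y) ^ (ij.2 + 2) * x ^ (ij.1 + 2)) := by
  induction t with
  | zero =>
    simp only [Nat.antidiagonal_zero, sum_singleton]
    field_simp
    ring
  | succ t ih =>
    have hsplit : 1 / ((x + y) ^ (t + 3) * y * x)
        = 1 / ((x + y) ^ (t + 4) * y) + 1 / ((x + y) ^ (t + 4) * x ^ 1) := by
      field_simp; ring
    calc 1 / (x ^ (t + 1 + 2) * y * (x + y)) = 1 / x * (1 / (x ^ (t + 2) * y * (x + y))) := by
          rw [one_div_mul_one_div]; ring_nf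
      _ = _ := by
          rw [ih, Nat.sum_antidiagonal_succ, mul_add, mul_add, mul_sum, one_div_mul_one_div,
            one_div_mul_one_div, mul_comm x, hsplit]
          simp only [one_div_mul_one_div]
          ring_nf

lemma zetaH_eq_two_mul_doubleZeta_add_sum (t : ℕ) :
    zetaH (t + 3) = 2 * doubleZeta (t + 3) 1
      + ∑ ij ∈ antidiagonal t, doubleZeta (ij.2 + 2) (ij.1 + 2) := by
  have hmain := summable_doubleZeta_term (a := t + 3) (b := 1) (by omega) le_rfl (by omega)
  have hswap : Summable fun p : ℕ × ℕ =>
      1 / (((p.1 : ℝ) + p.2 + 2) ^ (t + 3) * ((p.2 : ℝ) + 1)) :=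
    hmain.prod_symm.congr fun p => by
      simp only [Prod.fst_swap, Prod.snd_swap, pow_one, add_comm (p.2 : ℝ)]
  have hswap_eq : ∑' p : ℕ × ℕ, 1 / (((p.1 : ℝ) + p.2 + 2) ^ (t + 3) * ((p.2 : ℝ) + 1))
      = doubleZeta (t + 3) 1 := by
    rw [doubleZeta, ← (Equiv.prodComm ℕ ℕ).tsum_eq]
    simp only [Equiv.prodComm_apply, Prod.fst_swap, Prod.snd_swap, pow_one, add_comm (_ : ℝ)]
  have hsum : ∀ ij ∈ antidiagonal t, Summable fun p : ℕ × ℕ =>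
      1 / (((p.1 : ℝ) + p.2 + 2) ^ (ij.2 + 2) * ((p.1 : ℝ) + 1) ^ (ij.1 + 2)) :=
    fun ij _ => summable_doubleZeta_term (by omega) (by omega) (by omega)
  have hpf (p : ℕ × ℕ) :
      1 / (((p.1 : ℝ) + 1) ^ (t + 2) * ((p.2 : ℝ) + 1) * ((p.1 : ℝ) + p.2 + 2))
        = 1 / (((p.1 : ℝ) + p.2 + 2) ^ (t + 3) * ((p.2 : ℝ) + 1))
          + 1 / (((p.1 : ℝ) + p.2 + 2) ^ (t + 3) * ((p.1 : ℝ) + 1) ^ 1)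
          + ∑ ij ∈ antidiagonal t,
              1 / (((p.1 : ℝ) + p.2 + 2) ^ (ij.2 + 2) * ((p.1 : ℝ) + 1) ^ (ij.1 + 2)) := by
    have h := one_div_pow_mul_mul_add (x := (p.1 : ℝ) + 1) (y := (p.2 : ℝ) + 1)
      (by positivity) (by positivity) (by positivity) t
    rwa [show (p.1 : ℝ) + 1 + (p.2 + 1) = p.1 + p.2 + 2 by ring] at h
  rw [← tsum_one_div_pow_mul_mul_add (s := t + 2) (by omega), tsum_congr hpf,
    (hswap.add hmain).tsum_add (summable_sum hsum), hswap.tsum_add hmain,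
    Summable.tsum_finsetSum hsum, hswap_eq]
  simp only [doubleZeta]
  ring

/- Euler's formula for the linear Euler sums `zetaH`. -/
theorem two_mul_zetaH_add_three (t : ℕ) :
    2 * zetaH (t + 3) = (t + 5) * zeta (t + 4)
      - ∑ ij ∈ antidiagonal t, zeta (ij.1 + 2) * zeta (ij.2 + 2) := by
  have hstuffle : ∑ ij ∈ antidiagonal t, zeta (ij.1 + 2) * zeta (ij.2 + 2)
      = 2 * ∑ ij ∈ antidiagonal t, doubleZeta (ij.2 + 2) (ij.1 + 2)
        + (t + 1) * zeta (t + 4) := by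
    have hterm : ∀ ij ∈ antidiagonal t, zeta (ij.1 + 2) * zeta (ij.2 + 2)
        = doubleZeta (ij.2 + 2) (ij.1 + 2) + doubleZeta (ij.1 + 2) (ij.2 + 2)
          + zeta (t + 4) := by
      intro ij hij
      rw [HasAntidiagonal.mem_antidiagonal] at hij
      rw [zeta_mul_zeta (by omega) (by omega), ← hij]
      ring_nf
    have hswap := Nat.sum_antidiagonal_swap (n := t)
      (f := fun ij => doubleZeta (ij.2 + 2) (ij.1 + 2))
    simp only [Prod.fst_swap, Prod.snd_swap] at hswap
    rw [sum_congr rfl hterm, sum_add_distrib, sum_add_distrib, hswap, sum_const,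
      Nat.card_antidiagonal, nsmul_eq_mul]
    push_cast
    ring
  linarith [zetaH_eq_two_mul_doubleZeta_add_sum t,
    zetaH_eq_doubleZeta_add_zeta (s := t + 3) (by omega)]

lemma tsum_H_mul_hzeta {s : ℕ} (hs : 3 ≤ s) :
    ∑' n : ℕ, H (n + 1) * hzeta (s + 1) (n + 1) = zetaH s + zetaH (s + 1) - zeta s := by
  set f : ℕ × ℕ → ℝ := fun q => H (q.1 + 1) / ((q.1 : ℝ) + q.2 + 1) ^ (s + 1) with hf_def
  have hanti (m : ℕ) : ∑ kl ∈ antidiagonal m, f kl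
      = H (m + 1) / ((m : ℝ) + 1) ^ s + H (m + 1) / ((m : ℝ) + 1) ^ (s + 1)
        - 1 / ((m : ℝ) + 1) ^ s := by
    have hk : ∀ k ∈ range m.succ, f (k, m - k) = H (k + 1) / ((m : ℝ) + 1) ^ (s + 1) := by
      intro k hk
      simp only [hf_def, Nat.cast_sub (Nat.lt_succ_iff.mp (mem_range.mp hk))]
      ring_nf
    rw [Nat.sum_antidiagonal_eq_sum_range_succ_mk, sum_congr rfl hk, ← sum_div, sum_range_H_succ]
    field_simp
    ring
  have hS := summable_H_succ_div_pow hs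
  have hS₁ := summable_H_succ_div_pow (s := s + 1) (by omega)
  have hζ := summable_one_div_nat_add_one_pow (p := s) (by omega)
  have hf : Summable f :=
    summable_prod_of_summable_sum_antidiagonal
      (fun q => div_nonneg (H_nonneg _) (by positivity))
      (by simpa only [hanti] using (hS.add hS₁).sub hζ)
  calc ∑' n : ℕ, H (n + 1) * hzeta (s + 1) (n + 1) = ∑' p, f p := by
        rw [hf.tsum_prod]
        refine tsum_congr fun n => ?_
        rw [hzeta, ← tsum_mul_left]
        refine tsum_congr fun k => ?_
        simp only [hf_def]
        push_cast
        ring_nf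
    _ = ∑' m, ∑ kl ∈ antidiagonal m, f kl := tsum_prod_eq_tsum_sum_antidiagonal hf
    _ = zetaH s + zetaH (s + 1) - zeta s := by
        simp_rw [hanti]
        rw [(hS.add hS₁).tsum_sub hζ, hS.tsum_add hS₁]
        rfl

lemma zeta_eq_of_hasSum {p : ℕ} (hp : p ≠ 0) {v : ℝ}
    (h : HasSum (fun n : ℕ => 1 / (n : ℝ) ^ p) v) : zeta p = v := by
  have h' := (hasSum_nat_add_iff' 1).2 h
  simp only [range_one, sum_singleton, Nat.cast_zero, zero_pow hp, div_zero, sub_zero,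
    Nat.cast_add, Nat.cast_one] at h'
  exact h'.tsum_eq

lemma zeta_two_mul_zeta_two : zeta 2 * zeta 2 = 5 / 2 * zeta 4 := by
  rw [zeta_eq_of_hasSum two_ne_zero hasSum_zeta_two,
    zeta_eq_of_hasSum four_ne_zero hasSum_zeta_four]
  ring

theorem stmt13 :
    ∑' n : ℕ, H (n + 1) * hzeta 4 (n + 1) =
      (5 / 4) * zeta 4 + 3 * zeta 5 - zeta 2 * zeta 3 - zeta 3 := by
  have euler3 := two_mul_zetaH_add_three 0
  have euler4 := two_mul_zetaH_add_three 1
  simp only [Nat.antidiagonal_zero, Nat.antidiagonal_succ] at euler3 euler4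
  norm_num at euler3 euler4
  rw [tsum_H_mul_hzeta le_rfl]
  linarith [zeta_two_mul_zeta_two]
end

section
/- For every positive integer r, sum_{n=1}^infty h_n^(r) / (n(n+1)...(n+r)) = pi^2/(6 * r!), where h_n^(r) are hyperharmonic numbers. -/
open scoped BigOperators

/-!
With `P r n = n (n + 1) ⋯ (n + r)`, the difference `(n + r + 1) - n = r + 1` gives
`1 / P r n - 1 / P r (n + 1) = (r + 1) / P (r + 1) n`. Summing by parts against it, with
`h (r + 1) n - h (r + 1) (n - 1) = h r n`, yields
`(r + 1) ∑_{n ≤ N} h (r + 1) n / P (r + 1) n`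
  `= ∑_{n ≤ N} h r n / P r n - h (r + 1) N / P r (N + 1)`.
The boundary term converges and, divided by `N`, is the general term of a convergent series, so it
tends to `0`. Hence each step in `r` divides the sum by `r + 1`, starting from the Basel sum
`∑ 1 / n ^ 2 = π ^ 2 / 6` at `r = 0`.
-/

open Finset Filter Topology

lemma eq_zero_of_tendsto_of_summable_div_natCast {a : ℕ → ℝ} {L : ℝ}
    (ha : Tendsto a atTop (𝓝 L)) (hs : Summable fun n : ℕ ↦ a n / n) : L = 0 := by
  by_contra hL
  have hL' : 0 < |L| := abs_pos.2 hL
  have hlarge : ∀ᶠ n in atTop, |L| / 2 ≤ |a n| := by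
    have := (continuous_abs.tendsto L).comp ha
    exact this.eventually (le_mem_nhds (by linarith))
  refine Real.not_summable_one_div_natCast <|
    (hs.abs.mul_left (2 / |L|)).of_norm_bounded_eventually_nat ?_
  filter_upwards [hlarge] with n hn
  rw [Real.norm_eq_abs, abs_of_nonneg (by positivity), abs_div, Nat.abs_cast, ← mul_div_assoc]
  refine div_le_div_of_nonneg_right ?_ n.cast_nonneg
  rw [div_mul_eq_mul_div, le_div_iff₀ hL']
  linarith

lemma h_nonneg : ∀ r n, 0 ≤ h r n
  | 0, n => by simp only [h]; positivity
  | r + 1, n => sum_nonneg fun k _ ↦ h_nonneg r (k + 1)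

@[simp] lemma h_succ_zero (r : ℕ) : h (r + 1) 0 = 0 := by simp [h]

lemma h_succ_succ (r n : ℕ) : h (r + 1) (n + 1) = h (r + 1) n + h r (n + 1) := by
  simp only [h, sum_range_succ]

/-- The paper's `n (n + 1) ⋯ (n + r)`, evaluated at `n + 1`. -/
noncomputable def risingProd (r n : ℕ) : ℝ := ∏ i ∈ range (r + 1), ((n : ℝ) + 1 + i)

lemma risingProd_pos (r n : ℕ) : 0 < risingProd r n :=
  prod_pos fun _ _ ↦ by positivity

lemma risingProd_succ (r n : ℕ) : risingProd (r + 1) n = risingProd r n * (n + r + 2) := by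
  rw [risingProd, prod_range_succ, ← risingProd]; push_cast; ring

lemma risingProd_succ' (r n : ℕ) : risingProd (r + 1) n = (n + 1) * risingProd r (n + 1) := by
  rw [risingProd, prod_range_succ', mul_comm, risingProd]
  push_cast
  congr 1
  · ring
  · exact prod_congr rfl fun i _ ↦ by ring

lemma inv_risingProd_sub_inv_risingProd_succ (r n : ℕ) :
    1 / risingProd r n - 1 / risingProd r (n + 1) = (r + 1) / risingProd (r + 1) n := by
  have h₀ := (risingProd_pos r n).ne'
  have h₁ := (risingProd_pos r (n + 1)).ne'
  rw [div_sub_div _ _ h₀ h₁, div_eq_div_iff (mul_ne_zero h₀ h₁) (risingProd_pos _ _).ne']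
  linear_combination
    risingProd r (n + 1) * risingProd_succ r n - risingProd r n * risingProd_succ' r n

noncomputable def hyperTerm (r n : ℕ) : ℝ := h r (n + 1) / risingProd r n

lemma hyperTerm_nonneg (r n : ℕ) : 0 ≤ hyperTerm r n :=
  div_nonneg (h_nonneg r (n + 1)) (risingProd_pos r n).le

lemma hyperTerm_succ (r n : ℕ) :
    hyperTerm (r + 1) n = h (r + 1) (n + 1) / risingProd r (n + 1) / (n + 1 : ℕ) := by
  rw [hyperTerm, risingProd_succ', div_div, mul_comm]; push_cast; rfl

/-- Abel summation against `1 / risingProd r n - 1 / risingProd r (n + 1)`. -/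
lemma sum_hyperTerm_succ (r N : ℕ) :
    (r + 1) * ∑ n ∈ range N, hyperTerm (r + 1) n + h (r + 1) N / risingProd r N =
      ∑ n ∈ range N, hyperTerm r n := by
  induction N with
  | zero => simp
  | succ N ih =>
    rw [sum_range_succ, sum_range_succ, ← ih, hyperTerm, hyperTerm, h_succ_succ]
    linear_combination (-(h (r + 1) N + h r (N + 1))) * inv_risingProd_sub_inv_risingProd_succ r N

lemma hasSum_hyperTerm_zero : HasSum (hyperTerm 0) (Real.pi ^ 2 / 6) := by
  have hterm : hyperTerm 0 = fun n ↦ 1 / ((n + 1 : ℕ) : ℝ) ^ 2 := by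
    funext n
    simp [hyperTerm, risingProd, h, sq, div_eq_mul_inv]
  simpa [hterm] using (hasSum_nat_add_iff' 1).2 hasSum_zeta_two

/-- The boundary term of `sum_hyperTerm_succ` converges, and divided by `N` it is a term of the
convergent series `∑ hyperTerm (r + 1)`, so its limit is `0`. -/
lemma hasSum_hyperTerm_succ {r : ℕ} {s : ℝ} (hs : HasSum (hyperTerm r) s) :
    HasSum (hyperTerm (r + 1)) (s / (r + 1)) := by
  have hsum : Summable (hyperTerm (r + 1)) := by
    refine summable_of_sum_range_le (hyperTerm_nonneg _) (c := s / (r + 1)) fun N ↦ ?_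
    rw [le_div_iff₀ (by positivity), mul_comm]
    have hpartial := sum_le_hasSum (range N) (fun n _ ↦ hyperTerm_nonneg r n) hs
    have hboundary := div_nonneg (h_nonneg (r + 1) N) (risingProd_pos r N).le
    linarith [sum_hyperTerm_succ r N]
  set s' := ∑' n, hyperTerm (r + 1) n
  have hboundary :
      Tendsto (fun N ↦ h (r + 1) N / risingProd r N) atTop (𝓝 (s - (r + 1) * s')) := by
    refine (hs.tendsto_sum_nat.sub (hsum.hasSum.tendsto_sum_nat.const_mul (r + 1 : ℝ))).congr
      fun N ↦ ?_
    linarith [sum_hyperTerm_succ r N]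
  have hdiv : Summable fun N : ℕ ↦ h (r + 1) N / risingProd r N / N := by
    rw [← summable_nat_add_iff 1]
    exact hsum.congr (hyperTerm_succ r)
  have hlimit := eq_zero_of_tendsto_of_summable_div_natCast hboundary hdiv
  rw [show s / (r + 1) = s' by field_simp; linarith]
  exact hsum.hasSum

lemma hasSum_hyperTerm (r : ℕ) : HasSum (hyperTerm r) (Real.pi ^ 2 / (6 * r.factorial)) := by
  induction r with
  | zero => simpa using hasSum_hyperTerm_zero
  | succ r ih =>
    convert hasSum_hyperTerm_succ ih using 1
    push_cast [Nat.factorial_succ]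
    field_simp

theorem stmt16_general (r : ℕ) :
    ∑' n : ℕ, h r (n + 1) / ∏ i ∈ Finset.range (r + 1), ((n : ℝ) + 1 + i) =
      Real.pi ^ 2 / (6 * (r.factorial : ℝ)) :=
  (hasSum_hyperTerm r).tsum_eq

theorem stmt16 (r : ℕ) (hr : 1 ≤ r) :
    ∑' n : ℕ, h r (n + 1) / ∏ i ∈ Finset.range (r + 1), ((n : ℝ) + 1 + i) =
      Real.pi ^ 2 / (6 * (r.factorial : ℝ)) :=
  stmt16_general r
end
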